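/- Let c₁ = a³, c₂ = b³, c₃ = c³, c₄ = a(b²−c²), c₅ = b(a²−c²), c₆ = c(a²−b²) in ℂ[a,b,c], and let H(α,β,γ) be the 6×6 matrix of all second-order partial derivatives of c₁,…,c₆ (columns indexed by the pairs (a,a),(b,b),(c,c),(a,b),(a,c),(b,c)) evaluated at (α,β,γ). Let Z be the B₃ configuration with representatives (1,0,0), (0,1,0), (0,0,1), (1,1,0), (1,−1,0), (1,0,1), (1,0,−1), (0,1,1), (0,1,−1). Then for every (α,β,γ) ∈ ℂ³ \ {0} that is not a scalar multiple of one of the nine points of Z, the matrix H(α,β,γ) has rank exactly 5, while at each point of Z (i.e. (α,β,γ) a nonzero scalar multiple of one of the nine representatives) its rank is exactly 4. (Equivalently, dim Osc²_Q(X_{B₃}') = 4 for all Q ∉ Z and = 3 for Q ∈ Z.) -/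

import Mathlib

open MvPolynomial

/-- The six cubics a³, b³, c³, a(b²−c²), b(a²−c²), c(a²−b²) defining the
companion B₃ surface (variables a, b, c as X 0, X 1, X 2). -/
noncomputable def companionCubics : Fin 6 → MvPolynomial (Fin 3) ℂ :=
  ![X 0 ^ 3, X 1 ^ 3, X 2 ^ 3,
    X 0 * (X 1 ^ 2 - X 2 ^ 2), X 1 * (X 0 ^ 2 - X 2 ^ 2), X 2 * (X 0 ^ 2 - X 1 ^ 2)]

/-- The six unordered pairs of variables (a,a),(b,b),(c,c),(a,b),(a,c),(b,c). -/
def varPairs : Fin 6 → Fin 3 × Fin 3 :=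
  ![(0, 0), (1, 1), (2, 2), (0, 1), (0, 2), (1, 2)]

/-- The 6×6 matrix of all second-order partial derivatives of the six companion
cubics, evaluated at a point of ℂ³. -/
noncomputable def companionHessian (v : Fin 3 → ℂ) : Matrix (Fin 6) (Fin 6) ℂ :=
  Matrix.of fun i j =>
    eval v (pderiv (varPairs j).1 (pderiv (varPairs j).2 (companionCubics i)))

/-- The nine points of the B₃ configuration in ℂ³. -/
noncomputable def B3points : Fin 9 → (Fin 3 → ℂ) :=
  ![![1, 0, 0], ![0, 1, 0], ![0, 0, 1],
    ![1, 1, 0], ![1, -1, 0], ![1, 0, 1],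
    ![1, 0, -1], ![0, 1, 1], ![0, 1, -1]]

/-! Write `H(a,b,c)` for the Hessian matrix; its entries are linear in `(a,b,c)`, so
scaling the point scales `H` and leaves its rank unchanged. The vector `(0,0,0,c,b,a)` lies
in the kernel of `H(a,b,c)`, so the rank is at most 5 away from the origin. The four 5×5
minors `864a²bc²`, `288b²c(b²−c²)`, `288a²c(c²−a²)` and `288a²b(b²−a²)` vanish
simultaneously exactly on the cone over `Z`, which gives rank 5 off `Z`. At each point of `Z`
the kernel acquires a second vector, while the 4×4 minors `432ab²c`, `−48a²(a²−b²)`,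
`−48b²(b²−c²)` and `48c²(c²−a²)` have no common zero besides the origin, so the rank there
is exactly 4. -/

namespace Matrix

variable {K : Type*} [Field K] {m n : Type*} [Fintype n]

theorem le_rank_of_det_submatrix_ne_zero {k : ℕ} (A : Matrix m n K) (r : Fin k → m)
    (c : Fin k → n) (h : (A.submatrix r c).det ≠ 0) : k ≤ A.rank := by
  simpa [rank_of_det_ne_zero h] using rank_submatrix_le A r c

variable [Fintype m]

theorem rank_add_le_card_of_mul_eq_zero_of_det_submatrix_ne_zero {k : ℕ}
    {A : Matrix m n K} {B : Matrix n (Fin k) K} (hAB : A * B = 0) (r : Fin k → n)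
    (h : (B.submatrix r id).det ≠ 0) : A.rank + k ≤ Fintype.card n :=
  (add_le_add_right (B.le_rank_of_det_submatrix_ne_zero r id h) _).trans
    (rank_add_rank_le_card_of_mul_eq_zero hAB)

theorem rank_add_one_le_card_of_mulVec_eq_zero {A : Matrix m n K} {w : n → K}
    (hw : A *ᵥ w = 0) (j : n) (hj : w j ≠ 0) : A.rank + 1 ≤ Fintype.card n := by
  refine rank_add_le_card_of_mul_eq_zero_of_det_submatrix_ne_zero (B := replicateCol (Fin 1) w)
    ?_ ![j] (by rw [det_fin_one]; simpa using hj)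
  ext i k
  simpa [replicateCol, mul_apply, mulVec, dotProduct] using congrFun hw i

theorem rank_add_two_le_card_of_mulVec_eq_zero {A : Matrix m n K} {w u : n → K}
    (hw : A *ᵥ w = 0) (hu : A *ᵥ u = 0) (j k : n) (hjk : w j * u k - u j * w k ≠ 0) :
    A.rank + 2 ≤ Fintype.card n := by
  refine rank_add_le_card_of_mul_eq_zero_of_det_submatrix_ne_zero
    (B := of fun i => ![w i, u i]) ?_ ![j, k] (by rw [det_fin_two]; simpa using hjk)
  ext i l
  fin_cases l
  · simpa [mul_apply, mulVec, dotProduct] using congrFun hw i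
  · simpa [mul_apply, mulVec, dotProduct] using congrFun hu i

end Matrix

open Matrix

@[simp]
theorem MvPolynomial.pderiv_ofNat {R σ : Type*} [CommSemiring R] (i : σ) (n : ℕ)
    [n.AtLeastTwo] : pderiv i (no_index (OfNat.ofNat n : MvPolynomial σ R)) = 0 := by
  rw [← Nat.cast_ofNat]
  exact (pderiv i).map_natCast n

noncomputable def explicitHessian (a b c : ℂ) : Matrix (Fin 6) (Fin 6) ℂ :=
  !![6 * a, 0, 0, 0, 0, 0;
     0, 6 * b, 0, 0, 0, 0;
     0, 0, 6 * c, 0, 0, 0;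
     0, 2 * a, -2 * a, 2 * b, -2 * c, 0;
     2 * b, 0, -2 * b, 2 * a, 0, -2 * c;
     2 * c, -2 * c, 0, 0, 2 * a, -2 * b]

theorem companionHessian_eq (v : Fin 3 → ℂ) :
    companionHessian v = explicitHessian (v 0) (v 1) (v 2) := by
  ext i j
  fin_cases i <;> fin_cases j <;>
    simp [companionHessian, companionCubics, varPairs, explicitHessian, pderiv_X] <;> ring

theorem explicitHessian_mulVec_eq_zero (a b c : ℂ) :
    explicitHessian a b c *ᵥ ![0, 0, 0, c, b, a] = 0 := by
  ext i
  fin_cases i <;> simp [explicitHessian, mulVec, dotProduct, Fin.sum_univ_succ] <;> ring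

theorem explicitHessian_smul (t a b c : ℂ) :
    explicitHessian (t * a) (t * b) (t * c) = t • explicitHessian a b c := by
  ext i j
  fin_cases i <;> fin_cases j <;> simp [explicitHessian] <;> ring

theorem det_explicitHessian_submatrix_four (a b c : ℂ) :
    ((explicitHessian a b c).submatrix ![0, 1, 2, 3] ![0, 1, 2, 3]).det
        = 432 * (a * b ^ 2 * c) ∧
    ((explicitHessian a b c).submatrix ![0, 3, 4, 5] ![0, 2, 3, 4]).det
        = -48 * (a ^ 2 * (a ^ 2 - b ^ 2)) ∧
    ((explicitHessian a b c).submatrix ![1, 3, 4, 5] ![0, 1, 3, 5]).det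
        = -48 * (b ^ 2 * (b ^ 2 - c ^ 2)) ∧
    ((explicitHessian a b c).submatrix ![2, 3, 4, 5] ![1, 2, 4, 5]).det
        = 48 * (c ^ 2 * (c ^ 2 - a ^ 2)) := by
  refine ⟨?_, ?_, ?_, ?_⟩
  · rw [show (explicitHessian a b c).submatrix ![0, 1, 2, 3] ![0, 1, 2, 3] =
        !![6 * a, 0, 0, 0; 0, 6 * b, 0, 0; 0, 0, 6 * c, 0; 0, 2 * a, -2 * a, 2 * b] by
      ext i j; fin_cases i <;> fin_cases j <;> rfl]
    simp [det_succ_row_zero, Fin.sum_univ_succ, Fin.succAbove]; ring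
  · rw [show (explicitHessian a b c).submatrix ![0, 3, 4, 5] ![0, 2, 3, 4] =
        !![6 * a, 0, 0, 0; 0, -2 * a, 2 * b, -2 * c;
          2 * b, -2 * b, 2 * a, 0; 2 * c, 0, 0, 2 * a] by
      ext i j; fin_cases i <;> fin_cases j <;> rfl]
    simp [det_succ_row_zero, Fin.sum_univ_succ, Fin.succAbove]; ring
  · rw [show (explicitHessian a b c).submatrix ![1, 3, 4, 5] ![0, 1, 3, 5] =
        !![0, 6 * b, 0, 0; 0, 2 * a, 2 * b, 0;
          2 * b, 0, 2 * a, -2 * c; 2 * c, -2 * c, 0, -2 * b] by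
      ext i j; fin_cases i <;> fin_cases j <;> rfl]
    simp [det_succ_row_zero, Fin.sum_univ_succ, Fin.succAbove]; ring
  · rw [show (explicitHessian a b c).submatrix ![2, 3, 4, 5] ![1, 2, 4, 5] =
        !![0, 6 * c, 0, 0; 2 * a, -2 * a, -2 * c, 0;
          0, -2 * b, 0, -2 * c; -2 * c, 0, 2 * a, -2 * b] by
      ext i j; fin_cases i <;> fin_cases j <;> rfl]
    simp [det_succ_row_zero, Fin.sum_univ_succ, Fin.succAbove]; ring

theorem det_explicitHessian_submatrix_five (a b c : ℂ) :
    ((explicitHessian a b c).submatrix ![0, 1, 2, 4, 5] ![0, 1, 2, 4, 5]).det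
        = 864 * (a ^ 2 * b * c ^ 2) ∧
    ((explicitHessian a b c).submatrix ![1, 2, 3, 4, 5] ![0, 1, 2, 3, 5]).det
        = 288 * (b ^ 2 * c * (b ^ 2 - c ^ 2)) ∧
    ((explicitHessian a b c).submatrix ![0, 2, 3, 4, 5] ![0, 1, 2, 3, 4]).det
        = 288 * (a ^ 2 * c * (c ^ 2 - a ^ 2)) ∧
    ((explicitHessian a b c).submatrix ![0, 1, 3, 4, 5] ![0, 1, 2, 3, 4]).det
        = 288 * (a ^ 2 * b * (b ^ 2 - a ^ 2)) := by
  refine ⟨?_, ?_, ?_, ?_⟩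
  · rw [show (explicitHessian a b c).submatrix ![0, 1, 2, 4, 5] ![0, 1, 2, 4, 5] =
        !![6 * a, 0, 0, 0, 0; 0, 6 * b, 0, 0, 0; 0, 0, 6 * c, 0, 0;
          2 * b, 0, -2 * b, 0, -2 * c; 2 * c, -2 * c, 0, 2 * a, -2 * b] by
      ext i j; fin_cases i <;> fin_cases j <;> rfl]
    simp [det_succ_row_zero, Fin.sum_univ_succ, Fin.succAbove]; ring
  · rw [show (explicitHessian a b c).submatrix ![1, 2, 3, 4, 5] ![0, 1, 2, 3, 5] =
        !![0, 6 * b, 0, 0, 0; 0, 0, 6 * c, 0, 0; 0, 2 * a, -2 * a, 2 * b, 0;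
          2 * b, 0, -2 * b, 2 * a, -2 * c; 2 * c, -2 * c, 0, 0, -2 * b] by
      ext i j; fin_cases i <;> fin_cases j <;> rfl]
    simp [det_succ_row_zero, Fin.sum_univ_succ, Fin.succAbove]; ring
  · rw [show (explicitHessian a b c).submatrix ![0, 2, 3, 4, 5] ![0, 1, 2, 3, 4] =
        !![6 * a, 0, 0, 0, 0; 0, 0, 6 * c, 0, 0; 0, 2 * a, -2 * a, 2 * b, -2 * c;
          2 * b, 0, -2 * b, 2 * a, 0; 2 * c, -2 * c, 0, 0, 2 * a] by
      ext i j; fin_cases i <;> fin_cases j <;> rfl]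
    simp [det_succ_row_zero, Fin.sum_univ_succ, Fin.succAbove]; ring
  · rw [show (explicitHessian a b c).submatrix ![0, 1, 3, 4, 5] ![0, 1, 2, 3, 4] =
        !![6 * a, 0, 0, 0, 0; 0, 6 * b, 0, 0, 0; 0, 2 * a, -2 * a, 2 * b, -2 * c;
          2 * b, 0, -2 * b, 2 * a, 0; 2 * c, -2 * c, 0, 0, 2 * a] by
      ext i j; fin_cases i <;> fin_cases j <;> rfl]
    simp [det_succ_row_zero, Fin.sum_univ_succ, Fin.succAbove]; ring

theorem rank_explicitHessian_le_five {a b c : ℂ} (h : a ≠ 0 ∨ b ≠ 0 ∨ c ≠ 0) :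
    (explicitHessian a b c).rank ≤ 5 := by
  obtain ⟨j, hj⟩ : ∃ j, (![0, 0, 0, c, b, a] : Fin 6 → ℂ) j ≠ 0 := by
    rcases h with h | h | h
    exacts [⟨5, h⟩, ⟨4, h⟩, ⟨3, h⟩]
  have := rank_add_one_le_card_of_mulVec_eq_zero (explicitHessian_mulVec_eq_zero a b c) j hj
  simp only [Fintype.card_fin] at this
  omega

theorem four_le_rank_explicitHessian {a b c : ℂ} (h : a ≠ 0 ∨ b ≠ 0 ∨ c ≠ 0) :
    4 ≤ (explicitHessian a b c).rank := by
  obtain ⟨h₁, h₂, h₃, h₄⟩ := det_explicitHessian_submatrix_four a b c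
  have hminor : a * b ^ 2 * c ≠ 0 ∨ a ^ 2 * (a ^ 2 - b ^ 2) ≠ 0 ∨
      b ^ 2 * (b ^ 2 - c ^ 2) ≠ 0 ∨ c ^ 2 * (c ^ 2 - a ^ 2) ≠ 0 := by
    by_contra! h0
    grind
  rcases hminor with h | h | h | h
  · exact le_rank_of_det_submatrix_ne_zero _ _ _ (h₁ ▸ mul_ne_zero (by norm_num) h)
  · exact le_rank_of_det_submatrix_ne_zero _ _ _ (h₂ ▸ mul_ne_zero (by norm_num) h)
  · exact le_rank_of_det_submatrix_ne_zero _ _ _ (h₃ ▸ mul_ne_zero (by norm_num) h)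
  · exact le_rank_of_det_submatrix_ne_zero _ _ _ (h₄ ▸ mul_ne_zero (by norm_num) h)

theorem five_le_rank_explicitHessian {a b c : ℂ}
    (h : a ^ 2 * b * c ^ 2 ≠ 0 ∨ b ^ 2 * c * (b ^ 2 - c ^ 2) ≠ 0 ∨
      a ^ 2 * c * (c ^ 2 - a ^ 2) ≠ 0 ∨ a ^ 2 * b * (b ^ 2 - a ^ 2) ≠ 0) :
    5 ≤ (explicitHessian a b c).rank := by
  obtain ⟨h₁, h₂, h₃, h₄⟩ := det_explicitHessian_submatrix_five a b c
  rcases h with h | h | h | h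
  · exact le_rank_of_det_submatrix_ne_zero _ _ _ (h₁ ▸ mul_ne_zero (by norm_num) h)
  · exact le_rank_of_det_submatrix_ne_zero _ _ _ (h₂ ▸ mul_ne_zero (by norm_num) h)
  · exact le_rank_of_det_submatrix_ne_zero _ _ _ (h₃ ▸ mul_ne_zero (by norm_num) h)
  · exact le_rank_of_det_submatrix_ne_zero _ _ _ (h₄ ▸ mul_ne_zero (by norm_num) h)

theorem exists_eq_smul_B3points_of_minors_eq_zero {a b c : ℂ} (h₁ : a ^ 2 * b * c ^ 2 = 0)
    (h₂ : b ^ 2 * c * (b ^ 2 - c ^ 2) = 0) (h₃ : a ^ 2 * c * (c ^ 2 - a ^ 2) = 0)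
    (h₄ : a ^ 2 * b * (b ^ 2 - a ^ 2) = 0) :
    ∃ (i : Fin 9) (t : ℂ), ![a, b, c] = t • B3points i := by
  simp only [mul_eq_zero, pow_eq_zero_iff, ne_eq, OfNat.ofNat_ne_zero, not_false_eq_true,
    sub_eq_zero, sq_eq_sq_iff_eq_or_eq_neg] at h₁ h₂ h₃ h₄
  by_cases ha : a = 0
  · rcases h₂ with (hb | hc) | hbc | hbc
    · exact ⟨2, c, by simp [B3points, ha, hb]⟩
    · exact ⟨1, b, by simp [B3points, ha, hc]⟩
    · exact ⟨7, b, by simp [B3points, ha, hbc]⟩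
    · exact ⟨8, b, by simp [B3points, ha, hbc]⟩
  by_cases hb : b = 0
  · rcases h₃ with (ha' | hc) | hca | hca
    · exact absurd ha' ha
    · exact ⟨0, a, by simp [B3points, hb, hc]⟩
    · exact ⟨5, a, by simp [B3points, hb, hca]⟩
    · exact ⟨6, a, by simp [B3points, hb, hca]⟩
  have hc : c = 0 := by tauto
  rcases h₄ with (ha' | hb') | hba | hba
  · exact absurd ha' ha
  · exact absurd hb' hb
  · exact ⟨3, a, by simp [B3points, hc, hba]⟩
  · exact ⟨4, a, by simp [B3points, hc, hba]⟩

theorem rank_explicitHessian_le_four {a b c : ℂ} {u : Fin 6 → ℂ} (j k : Fin 6)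
    (hjk : ![0, 0, 0, c, b, a] j * u k - u j * ![0, 0, 0, c, b, a] k ≠ 0)
    (hu : explicitHessian a b c *ᵥ u = 0) : (explicitHessian a b c).rank ≤ 4 := by
  have :=
    rank_add_two_le_card_of_mulVec_eq_zero (explicitHessian_mulVec_eq_zero a b c) hu j k hjk
  simp only [Fintype.card_fin] at this
  omega

theorem rank_companionHessian_B3points_le (i : Fin 9) :
    (companionHessian (B3points i)).rank ≤ 4 := by
  rw [companionHessian_eq]
  fin_cases i <;> [
    refine rank_explicitHessian_le_four (u := ![0, 1, 1, 0, 0, 0]) 5 1 (by simp [B3points]) ?_;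
    refine rank_explicitHessian_le_four (u := ![1, 0, 1, 0, 0, 0]) 4 0 (by simp [B3points]) ?_;
    refine rank_explicitHessian_le_four (u := ![1, 1, 0, 0, 0, 0]) 3 0 (by simp [B3points]) ?_;
    refine rank_explicitHessian_le_four (u := ![0, 0, 1, 1, 0, 0]) 4 2 (by simp [B3points]) ?_;
    refine rank_explicitHessian_le_four (u := ![0, 0, 1, -1, 0, 0]) 5 2 (by simp [B3points]) ?_;
    refine rank_explicitHessian_le_four (u := ![0, 1, 0, 0, 1, 0]) 3 1 (by simp [B3points]) ?_;
    refine rank_explicitHessian_le_four (u := ![0, 1, 0, 0, -1, 0]) 5 1 (by simp [B3points]) ?_;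
    refine rank_explicitHessian_le_four (u := ![1, 0, 0, 0, 0, 1]) 3 0 (by simp [B3points]) ?_;
    refine rank_explicitHessian_le_four (u := ![1, 0, 0, 0, 0, -1]) 4 0 (by simp [B3points]) ?_]
  all_goals
    ext l
    fin_cases l <;> simp [B3points, explicitHessian, mulVec, dotProduct, Fin.sum_univ_succ]

theorem companionHessian_smul (t : ℂ) (v : Fin 3 → ℂ) :
    companionHessian (t • v) = t • companionHessian v := by
  simp only [companionHessian_eq, Pi.smul_apply, smul_eq_mul, explicitHessian_smul]

/-- The matrix of second-order partials of the six companion cubics has rank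
exactly 5 at every nonzero point of ℂ³ not proportional to a point of the B₃
configuration, and rank exactly 4 at the points of the B₃ configuration:
dim Osc²_Q(X_{B₃}') = 4 for Q ∉ Z and = 3 for Q ∈ Z. -/
theorem companion_hessian_rank :
    (∀ v : Fin 3 → ℂ, v ≠ 0 → (¬ ∃ (i : Fin 9) (t : ℂ), v = t • B3points i) →
      (companionHessian v).rank = 5) ∧
    (∀ v : Fin 3 → ℂ, (∃ (i : Fin 9) (t : ℂ), t ≠ 0 ∧ v = t • B3points i) →
      (companionHessian v).rank = 4) := by
  constructor
  · intro v hv hZ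
    obtain ⟨a, b, c, rfl⟩ : ∃ a b c, v = ![a, b, c] :=
      ⟨v 0, v 1, v 2, by ext i; fin_cases i <;> rfl⟩
    have habc : a ≠ 0 ∨ b ≠ 0 ∨ c ≠ 0 := by
      contrapose! hv
      simp [hv.1, hv.2.1, hv.2.2]
    rw [companionHessian_eq]
    refine le_antisymm (rank_explicitHessian_le_five habc) (five_le_rank_explicitHessian ?_)
    by_contra! h
    exact hZ (exists_eq_smul_B3points_of_minors_eq_zero h.1 h.2.1 h.2.2.1 h.2.2.2)
  · rintro v ⟨i, t, ht, rfl⟩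
    rw [companionHessian_smul,
      rank_smul_of_mem_nonZeroDivisors _ (mem_nonZeroDivisors_of_ne_zero ht)]
    refine le_antisymm (rank_companionHessian_B3points_le i) ?_
    rw [companionHessian_eq]
    exact four_le_rank_explicitHessian (by fin_cases i <;> simp [B3points])
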